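/- arXiv:2201.00564 — 5 statements merged into one kernel-verified Lean document; each statement's English description precedes it below -/
import Mathlib

section
/- Let δ ∈ 2^{-ℕ}, τ > 0, N ∈ ℕ with N ≥ 2, and let A ⊆ (δ·ℤ) ∩ [0,1] be a set with |A| ≥ δ^{-N²τ}. Then there exists a (τ, 2δ^{-1/N}, N)-tight subset A' ⊆ A of cardinality |A'| ≥ δ^{N²τ}|A|. -/
open MeasureTheory Metric Set Pointwise

/-- δ is a dyadic scale: δ = 2^{-j} for some j ∈ ℕ. -/
def isDyadic (δ : ℝ) : Prop := ∃ j : ℕ, δ = 2 ^ (-(j : ℤ))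

/-- The δ-grid (δ·ℤ) ∩ [0,1]. -/
def grid (δ : ℝ) : Set ℝ := {x : ℝ | (∃ k : ℤ, x = (k : ℝ) * δ) ∧ x ∈ Set.Icc (0:ℝ) 1}

/-- δ·ℤ -/
def gridZ (δ : ℝ) : Set ℝ := {x : ℝ | ∃ k : ℤ, x = (k : ℝ) * δ}

/-- Least number of dyadic intervals of length δ needed to cover X. -/
noncomputable def covN (δ : ℝ) (X : Set ℝ) : ℕ :=
  sInf {n : ℕ | ∃ s : Finset ℤ, s.card = n ∧
    X ⊆ ⋃ k ∈ s, Set.Ico ((k : ℝ) * δ) (((k : ℝ) + 1) * δ)}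

/-- Support of a measure on ℝ. -/
def sptm (ν : Measure ℝ) : Set ℝ := {x : ℝ | ∀ ε > 0, 0 < ν (Metric.ball x ε)}

/-- The projection π_c(x,y) = x + cy. -/
def piC (c : ℝ) : ℝ × ℝ → ℝ := fun p => p.1 + c * p.2

/-- The exceptional set 𝓔(A∣B,ε): those c for which some large subset B' ⊆ B has
|A + cB'|_δ < δ^{-ε}|A|. -/
noncomputable def Eexc (δ ε : ℝ) (A B : Set ℝ) : Set ℝ :=
  {c : ℝ | ∃ B' ⊆ B, δ ^ ε * (B.ncard : ℝ) ≤ (B'.ncard : ℝ) ∧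
    (covN δ (A + c • B') : ℝ) < δ ^ (-ε) * (A.ncard : ℝ)}

/-- k-fold sumset (sumN 0 A = {0}). -/
def sumN : ℕ → Set ℝ → Set ℝ
  | 0, _ => {0}
  | (n+1), A => sumN n A + A


/-- A set A ⊆ δ·ℤ is (τ,T,N)-tight if |kA| ≤ T|kA'| for every 1 ≤ k ≤ N and every
subset A' ⊆ A with |A'| ≥ δ^τ|A|. -/
def isTight (δ τ T : ℝ) (N : ℕ) (A : Set ℝ) : Prop :=
  ∀ A' ⊆ A, δ ^ τ * (A.ncard : ℝ) ≤ (A'.ncard : ℝ) →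
    ∀ k : ℕ, 1 ≤ k → k ≤ N → ((sumN k A).ncard : ℝ) ≤ T * ((sumN k A').ncard : ℝ)

/-! If `B` is not tight, some `B' ⊆ B` with `|B'| ≥ δ^τ |B|` has a `k`-fold sumset smaller by the
factor `T = 2δ^{-1/N}` for some `k ≤ N`, so the potential `∏_{k ≤ N} |kB|` drops by `T` while the
size drops by at most `δ^τ`. The potential is at least `1` on nonempty sets and at most
`(N/δ + 1)^N < T^{N²+1}` on `A ⊆ δℤ ∩ [0,1]`, so starting from `A` one reaches a tight set after at
most `N²` steps. -/

theorem Finset.mul_prod_le_prod_of_mul_le {ι R : Type*} [CommSemiring R] [PartialOrder R]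
    [IsOrderedRing R] {s : Finset ι} {f g : ι → R} {c : R} {i : ι} (hi : i ∈ s) (hc : 0 ≤ c)
    (hf : ∀ j ∈ s, 0 ≤ f j) (hfg : ∀ j ∈ s, f j ≤ g j) (hcfg : c * f i ≤ g i) :
    c * ∏ j ∈ s, f j ≤ ∏ j ∈ s, g j := by
  classical
  rw [← Finset.mul_prod_erase s f hi, ← Finset.mul_prod_erase s g hi, ← mul_assoc]
  exact mul_le_mul hcfg (Finset.prod_le_prod (fun j hj => hf j (Finset.mem_of_mem_erase hj))
    fun j hj => hfg j (Finset.mem_of_mem_erase hj))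
    (Finset.prod_nonneg fun j hj => hf j (Finset.mem_of_mem_erase hj))
    ((mul_nonneg hc (hf i hi)).trans hcfg)

lemma isDyadic.pos {δ : ℝ} (hδ : isDyadic δ) : 0 < δ := by
  obtain ⟨j, rfl⟩ := hδ
  positivity

lemma isDyadic.le_one {δ : ℝ} (hδ : isDyadic δ) : δ ≤ 1 := by
  obtain ⟨j, rfl⟩ := hδ
  exact zpow_le_one_of_nonpos₀ one_le_two (by omega)

lemma sumN_mono {A B : Set ℝ} (h : A ⊆ B) : ∀ k, sumN k A ⊆ sumN k B
  | 0 => subset_rfl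
  | k + 1 => Set.add_subset_add (sumN_mono h k) h

lemma Set.Nonempty.sumN {A : Set ℝ} (h : A.Nonempty) : ∀ k, (_root_.sumN k A).Nonempty
  | 0 => singleton_nonempty 0
  | k + 1 => (h.sumN k).add h

lemma Set.Finite.sumN {A : Set ℝ} (h : A.Finite) : ∀ k, (_root_.sumN k A).Finite
  | 0 => finite_singleton 0
  | k + 1 => (h.sumN k).add h

lemma sumN_subset_gridZ_inter_Icc {δ : ℝ} {A : Set ℝ} (hA : A ⊆ grid δ) :
    ∀ k : ℕ, sumN k A ⊆ gridZ δ ∩ Icc 0 k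
  | 0 => by
    rintro x rfl
    exact ⟨⟨0, by simp⟩, by simp⟩
  | k + 1 => by
    rintro _ ⟨x, hx, a, ha, rfl⟩
    obtain ⟨⟨m, rfl⟩, hx0, hxk⟩ := sumN_subset_gridZ_inter_Icc hA k hx
    obtain ⟨⟨n, rfl⟩, ha0, ha1⟩ := hA ha
    exact ⟨⟨m + n, by push_cast; ring⟩, by positivity, by push_cast; linarith⟩

lemma ncard_le_div_add_one_of_subset_gridZ_inter_Icc {δ x : ℝ} (hδ : 0 < δ) (hx : 0 ≤ x)
    {S : Set ℝ} (hS : S ⊆ gridZ δ ∩ Icc 0 x) : (S.ncard : ℝ) ≤ x / δ + 1 := by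
  set F := (Finset.range (⌊x / δ⌋₊ + 1)).image fun m : ℕ => (m : ℝ) * δ
  have hSF : S ⊆ F := by
    intro y hy
    obtain ⟨⟨k, rfl⟩, h0, h1⟩ := hS hy
    lift k to ℕ using by exact_mod_cast nonneg_of_mul_nonneg_left h0 hδ
    simp only [F, Finset.coe_image, Finset.coe_range, mem_image, mem_Iio]
    exact ⟨k, Nat.lt_succ_of_le (Nat.le_floor ((le_div_iff₀ hδ).2 (by exact_mod_cast h1))),
      by push_cast; rfl⟩
  calc (S.ncard : ℝ) ≤ F.card := by
        exact_mod_cast (Set.ncard_le_ncard hSF F.finite_toSet).trans_eq (ncard_coe_finset F)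
    _ ≤ (⌊x / δ⌋₊ + 1 : ℕ) := by exact_mod_cast Finset.card_image_le.trans_eq (Finset.card_range _)
    _ ≤ x / δ + 1 := by
        push_cast
        gcongr
        exact Nat.floor_le (by positivity)

noncomputable def sumsetProd (N : ℕ) (A : Set ℝ) : ℝ :=
  ∏ k ∈ Finset.Icc 1 N, ((sumN k A).ncard : ℝ)

lemma one_le_sumsetProd {A : Set ℝ} (hA : A.Finite) (hne : A.Nonempty) (N : ℕ) :
    1 ≤ sumsetProd N A :=
  Finset.one_le_prod fun k _ => by
    exact_mod_cast (ncard_pos (hA.sumN k)).2 (hne.sumN k)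

lemma sumsetProd_le {δ : ℝ} (hδ : 0 < δ) {A : Set ℝ} (hA : A ⊆ grid δ) (N : ℕ) :
    sumsetProd N A ≤ (N / δ + 1) ^ N := by
  calc sumsetProd N A ≤ ∏ _k ∈ Finset.Icc 1 N, (N / δ + 1) := by
        refine Finset.prod_le_prod (fun _ _ => by positivity) fun k hk => ?_
        calc ((sumN k A).ncard : ℝ) ≤ k / δ + 1 :=
              ncard_le_div_add_one_of_subset_gridZ_inter_Icc hδ k.cast_nonneg
                (sumN_subset_gridZ_inter_Icc hA k)
          _ ≤ N / δ + 1 := by gcongr; exact_mod_cast (Finset.mem_Icc.1 hk).2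
    _ = (N / δ + 1) ^ N := by simp

lemma exists_mul_sumsetProd_le_of_not_isTight {δ τ T : ℝ} {N : ℕ} {B : Set ℝ} (hB : B.Finite)
    (hT : 0 ≤ T) (h : ¬isTight δ τ T N B) :
    ∃ B' ⊆ B, δ ^ τ * B.ncard ≤ B'.ncard ∧ T * sumsetProd N B' ≤ sumsetProd N B := by
  simp only [isTight, not_forall, not_le] at h
  obtain ⟨B', hB'B, hcard, k, hk1, hkN, hk⟩ := h
  refine ⟨B', hB'B, hcard, Finset.mul_prod_le_prod_of_mul_le (Finset.mem_Icc.2 ⟨hk1, hkN⟩) hT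
    (fun _ _ => by positivity) (fun j _ => ?_) hk.le⟩
  exact_mod_cast ncard_le_ncard (sumN_mono hB'B j) (hB.sumN j)

lemma exists_pow_mul_sumsetProd_le {δ τ T : ℝ} {N M : ℕ} {A : Set ℝ} (hA : A.Finite)
    (hT : 0 ≤ T) (hρ₀ : 0 ≤ δ ^ τ) (hρ₁ : δ ^ τ ≤ 1)
    (hnot : ∀ A' ⊆ A, (δ ^ τ) ^ M * A.ncard ≤ A'.ncard → ¬isTight δ τ T N A') :
    ∀ j ≤ M + 1, ∃ A' ⊆ A, (δ ^ τ) ^ j * A.ncard ≤ A'.ncard ∧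
      T ^ j * sumsetProd N A' ≤ sumsetProd N A
  | 0, _ => ⟨A, subset_rfl, by simp, by simp⟩
  | j + 1, hj => by
    obtain ⟨A', hA'A, hcard, hprod⟩ := exists_pow_mul_sumsetProd_le hA hT hρ₀ hρ₁ hnot j (by omega)
    have hdense : (δ ^ τ) ^ M * A.ncard ≤ A'.ncard :=
      (mul_le_mul_of_nonneg_right (pow_le_pow_of_le_one hρ₀ hρ₁ (by omega)) (by positivity)).trans
        hcard
    obtain ⟨A'', hA''A', hcard', hprod'⟩ := exists_mul_sumsetProd_le_of_not_isTight
      (hA.subset hA'A) hT (hnot A' hA'A hdense)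
    refine ⟨A'', hA''A'.trans hA'A, ?_, ?_⟩
    · calc (δ ^ τ) ^ (j + 1) * A.ncard = δ ^ τ * ((δ ^ τ) ^ j * A.ncard) := by ring
        _ ≤ δ ^ τ * A'.ncard := by gcongr
        _ ≤ A''.ncard := hcard'
    · calc T ^ (j + 1) * sumsetProd N A'' = T ^ j * (T * sumsetProd N A'') := by ring
        _ ≤ T ^ j * sumsetProd N A' := by gcongr
        _ ≤ sumsetProd N A := hprod

lemma div_add_one_pow_lt_two_mul_rpow_pow {δ : ℝ} (hδ₀ : 0 < δ) (hδ₁ : δ ≤ 1) (N : ℕ) :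
    ((N : ℝ) / δ + 1) ^ N < (2 * δ ^ (-(1 / (N : ℝ)))) ^ (N ^ 2 + 1) := by
  have hnum : ((N : ℝ) + 1) ^ N < 2 ^ (N ^ 2 + 1) := by
    exact_mod_cast calc (N + 1) ^ N ≤ (2 ^ N) ^ N := Nat.pow_le_pow_left N.lt_two_pow_self N
      _ = 2 ^ N ^ 2 := by ring
      _ < 2 ^ (N ^ 2 + 1) := Nat.pow_lt_pow_succ one_lt_two
  have hexp : δ ^ (-(N : ℝ)) ≤ (δ ^ (-(1 / (N : ℝ)))) ^ (N ^ 2 + 1) := by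
    rw [← Real.rpow_natCast, ← Real.rpow_mul hδ₀.le]
    apply Real.rpow_le_rpow_of_exponent_ge hδ₀ hδ₁
    rcases N.eq_zero_or_pos with rfl | hN
    · simp
    · have hN' : (0 : ℝ) < N := by exact_mod_cast hN
      push_cast
      rw [neg_mul, neg_le_neg_iff, one_div, inv_mul_eq_div, le_div_iff₀ hN']
      nlinarith
  calc ((N : ℝ) / δ + 1) ^ N ≤ (((N : ℝ) + 1) / δ) ^ N := by
        gcongr
        rw [add_div]
        gcongr
        exact one_le_one_div hδ₀ hδ₁
    _ = ((N : ℝ) + 1) ^ N * δ ^ (-(N : ℝ)) := by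
        rw [div_pow, Real.rpow_neg hδ₀.le, Real.rpow_natCast, div_eq_mul_inv]
    _ < 2 ^ (N ^ 2 + 1) * δ ^ (-(N : ℝ)) := by gcongr
    _ ≤ 2 ^ (N ^ 2 + 1) * (δ ^ (-(1 / (N : ℝ)))) ^ (N ^ 2 + 1) := by gcongr
    _ = (2 * δ ^ (-(1 / (N : ℝ)))) ^ (N ^ 2 + 1) := (mul_pow _ _ _).symm

theorem stmt6_general (δ τ : ℝ) (hδ : isDyadic δ) (hτ : 0 < τ) (N : ℕ)
    (A : Set ℝ) (hA : A ⊆ grid δ)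
    (hcard : δ ^ (-((N : ℝ) ^ 2 * τ)) ≤ (A.ncard : ℝ)) :
    ∃ A' ⊆ A, isTight δ τ (2 * δ ^ (-(1 / (N : ℝ)))) N A' ∧
      δ ^ ((N : ℝ) ^ 2 * τ) * (A.ncard : ℝ) ≤ (A'.ncard : ℝ) := by
  have hδ₀ := hδ.pos
  set T := 2 * δ ^ (-(1 / (N : ℝ)))
  have hApos : (0 : ℝ) < A.ncard := (Real.rpow_pos_of_pos hδ₀ _).trans_le hcard
  have hAfin : A.Finite := finite_of_ncard_pos (by exact_mod_cast hApos)
  have hρ₀ : 0 < δ ^ τ := Real.rpow_pos_of_pos hδ₀ τ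
  have hρ : δ ^ ((N : ℝ) ^ 2 * τ) = (δ ^ τ) ^ N ^ 2 := by
    rw [mul_comm, Real.rpow_mul hδ₀.le]
    exact_mod_cast Real.rpow_natCast (δ ^ τ) (N ^ 2)
  by_contra! htight
  obtain ⟨A', hA'A, hcard', hprod⟩ := exists_pow_mul_sumsetProd_le hAfin (by positivity) hρ₀.le
    (Real.rpow_le_one hδ₀.le hδ.le_one hτ.le)
    (fun A' hA'A hcard ht => (htight A' hA'A ht).not_ge (hρ ▸ hcard)) (N ^ 2 + 1) le_rfl
  have hA'ne : A'.Nonempty := nonempty_of_ncard_ne_zero <| by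
    have : (0 : ℝ) < A'.ncard := (by positivity : (0 : ℝ) < _).trans_le hcard'
    exact_mod_cast this.ne'
  refine (div_add_one_pow_lt_two_mul_rpow_pow hδ₀ hδ.le_one N).not_ge ?_
  calc T ^ (N ^ 2 + 1) ≤ T ^ (N ^ 2 + 1) * sumsetProd N A' :=
        le_mul_of_one_le_right (by positivity) (one_le_sumsetProd (hAfin.subset hA'A) hA'ne N)
    _ ≤ sumsetProd N A := hprod
    _ ≤ (N / δ + 1) ^ N := sumsetProd_le hδ₀ hA N

/-- Lemma 2.5: existence of tight subsets. -/
theorem stmt6 (δ τ : ℝ) (hδ : isDyadic δ) (hτ : 0 < τ) (N : ℕ) (hN : 2 ≤ N)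
    (A : Set ℝ) (hA : A ⊆ grid δ)
    (hcard : δ ^ (-((N : ℝ) ^ 2 * τ)) ≤ (A.ncard : ℝ)) :
    ∃ A' ⊆ A, isTight δ τ (2 * δ ^ (-(1 / (N : ℝ)))) N A' ∧
      δ ^ ((N : ℝ) ^ 2 * τ) * (A.ncard : ℝ) ≤ (A'.ncard : ℝ) :=
  stmt6_general δ τ hδ hτ N A hA hcard
end

section
/- There is an absolute constant C > 0 such that the following holds. Let δ ∈ 2^{-ℕ}, let C₁, C₂, C₃ > 0, and let A, B ⊆ δ·ℤ be finite sets with |A + A| ≤ C₁|A| and |B + B| ≤ C₂|B|. Let c ∈ ℝ, and let G ⊆ A × B be a subset with |G| ≥ |A||B|/C₃. Then |A + cB|_δ ≤ C · C₁C₂C₃ · |π_c(G)|_δ. -/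
open MeasureTheory Metric Set Pointwise

/-!
For each δ-interval index `k` met by `A + cB` pick `(a_k, b_k) ∈ A × B` with `π_c(a_k, b_k)`
in that interval. The map `(k, (a, b)) ↦ ((a_k + a, b_k + b), ⌊π_c(a, b)/δ⌋)` sends the indices
of `A + cB` times `G` into `(A + A) × (B + B) × (indices of π_c(G))` and is at most 2-to-1:
as `π_c` is linear, the image determines `k` up to the carry `⌊x + y⌋ - ⌊x⌋ - ⌊y⌋ ∈ {0, 1}`.
Hence `|A + cB|_δ |G| ≤ 2 |A + A| |B + B| |π_c(G)|_δ`, and the doubling and density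
hypotheses give the theorem with `C = 2`.
-/

lemma mem_Ico_mul_iff_floor_div_eq {δ : ℝ} (hδ : 0 < δ) (x : ℝ) (k : ℤ) :
    x ∈ Ico ((k : ℝ) * δ) (((k : ℝ) + 1) * δ) ↔ ⌊x / δ⌋ = k := by
  rw [mem_Ico, Int.floor_eq_iff, le_div_iff₀ hδ, div_lt_iff₀ hδ]

/-- For `δ > 0` this holds for every `X`: if the image is infinite, both sides are junk `0`. -/
lemma covN_eq_ncard_image_floor {δ : ℝ} (hδ : 0 < δ) (X : Set ℝ) :
    covN δ X = ((fun x => ⌊x / δ⌋) '' X).ncard := by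
  set I := (fun x => ⌊x / δ⌋) '' X
  have hcover (s : Finset ℤ) :
      X ⊆ ⋃ k ∈ s, Ico ((k : ℝ) * δ) (((k : ℝ) + 1) * δ) ↔ I ⊆ s := by
    rw [image_subset_iff]
    simp only [subset_def, mem_iUnion₂, mem_Ico_mul_iff_floor_div_eq hδ, exists_prop,
      exists_eq_right', mem_preimage, Finset.mem_coe]
  simp only [covN, hcover]
  rcases I.finite_or_infinite with hI | hI
  · refine le_antisymm
      (Nat.sInf_le ⟨hI.toFinset, (ncard_eq_toFinset_card I hI).symm, by simp⟩) ?_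
    refine le_csInf ⟨_, hI.toFinset, rfl, by simp⟩ ?_
    rintro _ ⟨s, rfl, hs⟩
    simpa using ncard_le_ncard hs
  · rw [hI.ncard, Nat.sInf_eq_zero]
    exact Or.inr (eq_empty_of_forall_notMem fun _ ⟨s, _, hs⟩ => hI (s.finite_toSet.subset hs))

lemma piC_add (c : ℝ) (p p' : ℝ × ℝ) : piC c (p + p') = piC c p + piC c p' := by
  simp only [piC, Prod.fst_add, Prod.snd_add]; ring

lemma image_piC_prod (c : ℝ) (A B : Set ℝ) : piC c '' (A ×ˢ B) = A + c • B := by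
  ext x
  simp [piC, mem_add, mem_smul_set, and_assoc]

lemma Int.floor_add_sub_floor_sub_floor_mem {R : Type*} [Ring R] [LinearOrder R]
    [IsStrictOrderedRing R] [FloorRing R] (a b : R) :
    ⌊a + b⌋ - ⌊a⌋ - ⌊b⌋ ∈ ({0, 1} : Set ℤ) := by
  have := Int.le_floor_add a b
  have := Int.le_floor_add_floor a b
  simp only [mem_insert_iff, mem_singleton_iff]
  omega

theorem covN_add_smul_mul_ncard_le {δ : ℝ} (hδ : 0 < δ) (c : ℝ) {A B : Set ℝ}
    (hA : A.Finite) (hB : B.Finite) {G : Set (ℝ × ℝ)} (hG : G ⊆ A ×ˢ B) :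
    covN δ (A + c • B) * G.ncard ≤
      2 * ((A + A).ncard * (B + B).ncard * covN δ (piC c '' G)) := by
  set q : ℝ → ℤ := fun x => ⌊x / δ⌋
  rw [covN_eq_ncard_image_floor hδ, covN_eq_ncard_image_floor hδ, ← image_piC_prod,
    image_image]
  set K := (fun p => q (piC c p)) '' (A ×ˢ B)
  set M := q '' (piC c '' G)
  set rep : ℤ → ℝ × ℝ := Function.invFunOn (fun p => q (piC c p)) (A ×ˢ B)
  have hrep {k : ℤ} (hk : k ∈ K) : rep k ∈ A ×ˢ B ∧ q (piC c (rep k)) = k :=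
    ⟨Function.invFunOn_mem hk, Function.invFunOn_eq hk⟩
  let F : ℤ × (ℝ × ℝ) → ((ℝ × ℝ) × ℤ) × ℤ := fun x =>
    ((rep x.1 + x.2, q (piC c x.2)), q (piC c (rep x.1 + x.2)) - x.1 - q (piC c x.2))
  have hmaps :
      ∀ x ∈ K ×ˢ G, F x ∈ (((A + A) ×ˢ (B + B)) ×ˢ M) ×ˢ ({0, 1} : Set ℤ) := by
    rintro ⟨k, p⟩ ⟨hk : k ∈ K, hp : p ∈ G⟩
    obtain ⟨⟨hrA, hrB⟩, hrk⟩ := hrep hk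
    obtain ⟨hpA, hpB⟩ := hG hp
    refine ⟨⟨⟨add_mem_add hrA hpA, add_mem_add hrB hpB⟩,
      mem_image_of_mem q (mem_image_of_mem _ hp)⟩, ?_⟩
    have hcarry := Int.floor_add_sub_floor_sub_floor_mem (piC c (rep k) / δ) (piC c p / δ)
    rw [← add_div, ← piC_add] at hcarry
    change q _ - q _ - q _ ∈ _ at hcarry
    rwa [hrk] at hcarry
  have hinj : Function.Injective F := by
    rintro ⟨k, p⟩ ⟨k', p'⟩ h
    simp only [F, Prod.mk.injEq] at h
    obtain ⟨⟨hsum, hm⟩, hcarry⟩ := h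
    rw [hsum, hm] at hcarry
    obtain rfl : k = k' := by omega
    exact Prod.ext rfl (add_left_cancel hsum)
  have hfin : ((((A + A) ×ˢ (B + B)) ×ˢ M) ×ˢ ({0, 1} : Set ℤ)).Finite :=
    (((hA.add hA).prod (hB.add hB)).prod (((hA.prod hB).subset hG).image _ |>.image _)).prod
      (toFinite _)
  have hcard := ncard_le_ncard_of_injOn F hmaps hinj.injOn hfin
  simp only [ncard_prod, ncard_pair zero_ne_one] at hcard
  linarith

/-- Lemma 2.7: if A, B have small doubling, then for any large G ⊆ A × B,
|A + cB|_δ ≲ C₁C₂C₃ |π_c(G)|_δ. -/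
theorem stmt7 :
    ∃ C : ℝ, 0 < C ∧
    ∀ δ : ℝ, isDyadic δ →
    ∀ C₁ C₂ C₃ : ℝ, 0 < C₁ → 0 < C₂ → 0 < C₃ →
    ∀ A B : Set ℝ, A.Finite → B.Finite → A ⊆ gridZ δ → B ⊆ gridZ δ →
    ((A + A).ncard : ℝ) ≤ C₁ * (A.ncard : ℝ) →
    ((B + B).ncard : ℝ) ≤ C₂ * (B.ncard : ℝ) →
    ∀ c : ℝ, ∀ G ⊆ A ×ˢ B,
    ((A.ncard : ℝ) * (B.ncard : ℝ)) / C₃ ≤ (G.ncard : ℝ) →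
    (covN δ (A + c • B) : ℝ) ≤ C * (C₁ * C₂ * C₃) * (covN δ (piC c '' G) : ℝ) := by
  refine ⟨2, two_pos, ?_⟩
  rintro δ ⟨j, rfl⟩ C₁ C₂ C₃ hC₁ hC₂ hC₃ A B hA hB - - hAA hBB c G hG hGcard
  have hδ : (0 : ℝ) < 2 ^ (-(j : ℤ)) := by positivity
  rcases (A + c • B).eq_empty_or_nonempty with hempty | hne
  · rw [hempty, covN_eq_ncard_image_floor hδ, image_empty, ncard_empty, Nat.cast_zero]
    positivity
  obtain ⟨hAne, hBne⟩ := add_nonempty.1 hne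
  have hAB : 0 < (A.ncard : ℝ) * B.ncard := by
    have := (ncard_pos hA).2 hAne
    have := (ncard_pos hB).2 (smul_set_nonempty.1 hBne)
    positivity
  have hcount := covN_add_smul_mul_ncard_le hδ c hA hB hG
  rw [div_le_iff₀ hC₃] at hGcard
  refine le_of_mul_le_mul_right ?_ hAB
  calc (covN _ (A + c • B) : ℝ) * (A.ncard * B.ncard)
      ≤ covN _ (A + c • B) * (G.ncard * C₃) := by gcongr
    _ = covN _ (A + c • B) * G.ncard * C₃ := by ring
    _ ≤ 2 * ((A + A).ncard * (B + B).ncard * covN _ (piC c '' G)) * C₃ :=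
      mul_le_mul_of_nonneg_right (by exact_mod_cast hcount) hC₃.le
    _ ≤ 2 * (C₁ * A.ncard * (C₂ * B.ncard) * covN _ (piC c '' G)) * C₃ := by gcongr
    _ = 2 * (C₁ * C₂ * C₃) * covN _ (piC c '' G) * (A.ncard * B.ncard) := by ring
end

section
/- Let δ ∈ 2^{-ℕ} and 0 < ε ≤ ε̄/2 with δ^{ε} ≤ 1/2 and δ^{ε̄ − ε} ≤ 1/4. Let A, B ⊆ (δ·ℤ) ∩ [0,1] be finite sets, and let B₁, …, B_N ⊆ B be pairwise disjoint subsets such that |B \ (B₁ ∪ ⋯ ∪ B_N)| ≤ δ^{2ε}|B|. Then 𝓔(A∣B,ε) ⊆ ⋃_𝒥 ⋂_{j ∈ 𝒥} 𝓔(A∣B_j, ε̄), where the union runs over all subsets 𝒥 ⊆ {1, …, N} with Σ_{j ∈ 𝒥} |B_j| ≥ δ^{ε}|B|/4. -/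
open MeasureTheory Metric Set Pointwise

/-!
Fix `c ∈ 𝓔(A∣B,ε)` with witness `B'`, and call the piece `B_j` heavy when
`|B' ∩ B_j| ≥ δ^ε̄ |B_j|`. For a heavy piece, `B' ∩ B_j` witnesses `c ∈ 𝓔(A∣B_j,ε̄)`, because
`A + c(B' ∩ B_j) ⊆ A + cB'` and `δ^{-ε} ≤ δ^{-ε̄}`. The light pieces hold at most
`δ^ε̄ |B| ≤ δ^ε |B| / 4` points of `B'` and the rest of `B` at most `δ^{2ε} |B| ≤ δ^ε |B| / 2`,
so the heavy pieces have total size at least `δ^ε |B| / 4`.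
-/

lemma grid_finite {δ : ℝ} (hδ : 0 < δ) : (grid δ).Finite := by
  refine ((Set.finite_Icc (0 : ℤ) ⌈1 / δ⌉).image fun k : ℤ => (k : ℝ) * δ).subset ?_
  rintro x ⟨⟨k, rfl⟩, hx0, hx1⟩
  refine ⟨k, ⟨?_, ?_⟩, rfl⟩
  · exact_mod_cast (mul_nonneg_iff_of_pos_right hδ).1 hx0
  · have hk : (k : ℝ) ≤ 1 / δ := by rw [le_div_iff₀ hδ]; exact hx1
    exact_mod_cast hk.trans (Int.le_ceil _)

lemma exists_dyadic_cover {δ : ℝ} (hδ : 0 < δ) {X : Set ℝ} (hX : X.Finite) :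
    ∃ s : Finset ℤ, X ⊆ ⋃ k ∈ s, Set.Ico ((k : ℝ) * δ) (((k : ℝ) + 1) * δ) := by
  refine ⟨hX.toFinset.image fun x => ⌊x / δ⌋, fun x hx => ?_⟩
  simp only [Set.mem_iUnion, Finset.mem_image]
  refine ⟨⌊x / δ⌋, ⟨x, hX.mem_toFinset.2 hx, rfl⟩, ?_, ?_⟩
  · rw [← le_div_iff₀ hδ]; exact Int.floor_le _
  · rw [← div_lt_iff₀ hδ]; exact Int.lt_floor_add_one _

lemma covN_mono {δ : ℝ} (hδ : 0 < δ) {X Y : Set ℝ} (hXY : X ⊆ Y) (hY : Y.Finite) :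
    covN δ X ≤ covN δ Y := by
  obtain ⟨s, hs⟩ := exists_dyadic_cover hδ hY
  have hne : {n : ℕ | ∃ s : Finset ℤ, s.card = n ∧
      Y ⊆ ⋃ k ∈ s, Set.Ico ((k : ℝ) * δ) (((k : ℝ) + 1) * δ)}.Nonempty := ⟨s.card, s, rfl, hs⟩
  obtain ⟨t, ht, htY⟩ := Nat.sInf_mem hne
  exact Nat.sInf_le ⟨t, ht, hXY.trans htY⟩

section Counting

variable {α ι : Type*} {B B' : Set α} {S : ι → Set α}

lemma ncard_le_ncard_diff_iUnion_add_sum_inter [Fintype ι] (hB : B.Finite) (hB' : B' ⊆ B) :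
    B'.ncard ≤ (B \ ⋃ i, S i).ncard + ∑ i, (B' ∩ S i).ncard := by
  have hcover : B' ⊆ (B \ ⋃ i, S i) ∪ ⋃ i, B' ∩ S i := by
    intro x hx
    by_cases hxS : x ∈ ⋃ i, S i
    · obtain ⟨i, hxi⟩ := Set.mem_iUnion.1 hxS
      exact Or.inr (Set.mem_iUnion.2 ⟨i, hx, hxi⟩)
    · exact Or.inl ⟨hB' hx, hxS⟩
  have hfin : ((B \ ⋃ i, S i) ∪ ⋃ i, B' ∩ S i).Finite :=
    (hB.subset Set.sdiff_subset).union
      (Set.finite_iUnion fun i => (hB.subset hB').inter_of_left _)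
  calc B'.ncard ≤ ((B \ ⋃ i, S i) ∪ ⋃ i, B' ∩ S i).ncard := Set.ncard_le_ncard hcover hfin
    _ ≤ (B \ ⋃ i, S i).ncard + (⋃ i, B' ∩ S i).ncard := Set.ncard_union_le _ _
    _ ≤ (B \ ⋃ i, S i).ncard + ∑ i, (B' ∩ S i).ncard :=
      Nat.add_le_add_left (Set.ncard_iUnion_le_of_fintype _) _

lemma sum_ncard_le_ncard_of_pairwise_disjoint (hB : B.Finite) (hS : ∀ i, S i ⊆ B)
    (hdisj : Pairwise (Function.onFun Disjoint S)) (s : Finset ι) :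
    ∑ i ∈ s, (S i).ncard ≤ B.ncard := by
  have hunion := s.finite_toSet.ncard_biUnion (fun i _ => hB.subset (hS i))
    (fun i _ j _ hij => hdisj hij)
  rw [finsum_mem_coe_finset] at hunion
  rw [← hunion]
  exact Set.ncard_le_ncard (Set.iUnion₂_subset fun i _ => hS i) hB

lemma exists_heavy_pieces [Fintype ι] {t : ℝ} (ht : 0 ≤ t) (hB : B.Finite) (hS : ∀ i, S i ⊆ B)
    (hdisj : Pairwise (Function.onFun Disjoint S)) (B' : Set α) :
    ∃ J : Finset ι, (∀ i ∈ J, t * ((S i).ncard : ℝ) ≤ (B' ∩ S i).ncard) ∧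
      ∑ i, ((B' ∩ S i).ncard : ℝ) ≤ ∑ i ∈ J, ((S i).ncard : ℝ) + t * B.ncard := by
  classical
  set P : ι → Prop := fun i => t * ((S i).ncard : ℝ) ≤ (B' ∩ S i).ncard
  refine ⟨Finset.univ.filter P, fun i hi => (Finset.mem_filter.1 hi).2, ?_⟩
  rw [← Finset.sum_filter_add_sum_filter_not Finset.univ P]
  refine add_le_add (Finset.sum_le_sum fun i _ => ?_) ?_
  · exact_mod_cast Set.ncard_le_ncard Set.inter_subset_right (hB.subset (hS i))
  · calc ∑ i ∈ Finset.univ.filter (¬P ·), ((B' ∩ S i).ncard : ℝ)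
        ≤ ∑ i ∈ Finset.univ.filter (¬P ·), t * (S i).ncard :=
          Finset.sum_le_sum fun i hi => le_of_lt (not_le.1 (Finset.mem_filter.1 hi).2)
      _ ≤ t * B.ncard := by
          rw [← Finset.mul_sum]
          gcongr
          exact_mod_cast sum_ncard_le_ncard_of_pairwise_disjoint hB hS hdisj _

end Counting

lemma mem_Eexc_of_covN_lt {δ ε εb c : ℝ} {A B' C : Set ℝ} (hδ : 0 < δ) (hB' : B'.Finite)
    (hcov : (covN δ (A + c • B') : ℝ) < δ ^ (-ε) * A.ncard) (hexp : δ ^ (-ε) ≤ δ ^ (-εb))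
    (hheavy : δ ^ εb * (C.ncard : ℝ) ≤ (B' ∩ C).ncard) :
    c ∈ Eexc δ εb A C := by
  -- `ncard` of an infinite set is `0`, which `hcov` rules out.
  have hA : A.Finite := Set.finite_of_ncard_pos <| by
    by_contra! h
    simp only [Nat.le_zero.1 h, Nat.cast_zero, mul_zero] at hcov
    exact (Nat.cast_nonneg _).not_gt hcov
  refine ⟨B' ∩ C, Set.inter_subset_right, hheavy, ?_⟩
  calc (covN δ (A + c • (B' ∩ C)) : ℝ) ≤ covN δ (A + c • B') := by
        exact_mod_cast covN_mono hδ (Set.add_subset_add_left (Set.smul_set_mono (a := c)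
          Set.inter_subset_left)) (hA.add hB'.smul_set)
    _ < δ ^ (-ε) * A.ncard := hcov
    _ ≤ δ ^ (-εb) * A.ncard := by gcongr

theorem stmt10_general (δ ε εb : ℝ) (hδ : isDyadic δ)
    (h1 : δ ^ ε ≤ 1/2) (h2 : δ ^ (εb - ε) ≤ 1/4)
    (A B : Set ℝ) (hB : B ⊆ grid δ)
    (N : ℕ) (Bs : Fin N → Set ℝ) (hBs : ∀ j, Bs j ⊆ B)
    (hdisj : Pairwise (Function.onFun Disjoint Bs))
    (hsmall : (((B \ ⋃ j, Bs j).ncard : ℝ)) ≤ δ ^ (2 * ε) * (B.ncard : ℝ)) :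
    Eexc δ ε A B ⊆
      ⋃ J ∈ {J : Finset (Fin N) | δ ^ ε * (B.ncard : ℝ) / 4 ≤ ∑ j ∈ J, ((Bs j).ncard : ℝ)},
        ⋂ j ∈ J, Eexc δ εb A (Bs j) := by
  have hδpos : 0 < δ := by obtain ⟨j, rfl⟩ := hδ; positivity
  have hBfin : B.Finite := (grid_finite hδpos).subset hB
  have h2ε : δ ^ (2 * ε) ≤ δ ^ ε / 2 := by
    rw [two_mul, Real.rpow_add hδpos]
    nlinarith [Real.rpow_pos_of_pos hδpos ε]
  have hεb : δ ^ εb ≤ δ ^ ε / 4 := by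
    rw [show εb = ε + (εb - ε) by ring, Real.rpow_add hδpos]
    nlinarith [Real.rpow_pos_of_pos hδpos ε]
  rintro c ⟨B', hB'B, hcard, hcov⟩
  obtain ⟨J, hJheavy, hJsum⟩ :=
    exists_heavy_pieces (Real.rpow_nonneg hδpos.le εb) hBfin hBs hdisj B'
  have hsplit : (B'.ncard : ℝ) ≤ (B \ ⋃ j, Bs j).ncard + ∑ j, ((B' ∩ Bs j).ncard : ℝ) := by
    exact_mod_cast ncard_le_ncard_diff_iUnion_add_sum_inter hBfin hB'B
  have hεεb : δ ^ (-ε) ≤ δ ^ (-εb) := by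
    rw [Real.rpow_neg hδpos.le, Real.rpow_neg hδpos.le]
    exact inv_anti₀ (Real.rpow_pos_of_pos hδpos εb)
      (hεb.trans (by linarith [Real.rpow_pos_of_pos hδpos ε]))
  have hB0 : (0 : ℝ) ≤ B.ncard := Nat.cast_nonneg _
  refine Set.mem_biUnion (x := J) ?_ (Set.mem_iInter₂.2 fun j hj => ?_)
  · show δ ^ ε * (B.ncard : ℝ) / 4 ≤ ∑ j ∈ J, ((Bs j).ncard : ℝ)
    linarith [mul_le_mul_of_nonneg_right h2ε hB0, mul_le_mul_of_nonneg_right hεb hB0]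
  · exact mem_Eexc_of_covN_lt hδpos (hBfin.subset hB'B) hcov hεεb (hJheavy j hj)

/-- The inclusion 𝓔(A∣B,ε) ⊆ ⋃_𝒥 ⋂_{j∈𝒥} 𝓔(A∣B_j,ε̄) over heavy index sets 𝒥. -/
theorem stmt10 (δ ε εb : ℝ) (hδ : isDyadic δ) (hε : 0 < ε) (hεεb : ε ≤ εb / 2)
    (h1 : δ ^ ε ≤ 1/2) (h2 : δ ^ (εb - ε) ≤ 1/4)
    (A B : Set ℝ) (hA : A ⊆ grid δ) (hB : B ⊆ grid δ)
    (N : ℕ) (Bs : Fin N → Set ℝ) (hBs : ∀ j, Bs j ⊆ B)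
    (hdisj : Pairwise (Function.onFun Disjoint Bs))
    (hsmall : (((B \ ⋃ j, Bs j).ncard : ℝ)) ≤ δ ^ (2 * ε) * (B.ncard : ℝ)) :
    Eexc δ ε A B ⊆
      ⋃ J ∈ {J : Finset (Fin N) | δ ^ ε * (B.ncard : ℝ) / 4 ≤ ∑ j ∈ J, ((Bs j).ncard : ℝ)},
        ⋂ j ∈ J, Eexc δ εb A (Bs j) :=
  stmt10_general δ ε εb hδ h1 h2 A B hB N Bs hBs hdisj hsmall
end

section
/- Let (C, ν) be a Borel probability space (C ⊆ ℝ, ν a Borel probability measure on C), let X be a finite nonempty set, let θ ∈ (0,1], and for each c ∈ C let S_c ⊆ X be a subset with |S_c| ≥ θ|X|, such that for every x ∈ X the map c ↦ 1_{S_c}(x) is ν-measurable. Then for every N ∈ ℕ, the set Ω := {(c₁, …, c_N) ∈ C^N : |S_{c₁} ∩ ⋯ ∩ S_{c_N}| ≥ (1/2)θ^N|X|} satisfies ν^N(Ω) ≥ (1/2)θ^N. -/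
open MeasureTheory Metric Set Pointwise
open scoped ENNReal

lemma null_of_disjoint {ν : Measure ℝ} [IsProbabilityMeasure ν] {C : Set ℝ} (hC : ν C = 1)
    {E : Set ℝ} (hE : MeasurableSet E) (h : ∀ x ∈ E, x ∉ C) : ν E = 0 := by
  have h1 : C ⊆ Eᶜ := fun x hx hxE => h x hxE hx
  have h2 : (1 : ℝ≥0∞) ≤ ν Eᶜ := hC ▸ measure_mono h1
  have h3 : ν Eᶜ = 1 - ν E := by
    rw [measure_compl hE (measure_ne_top ν E), measure_univ]
  have h4 : ν E ≤ 1 := prob_le_one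
  have h5 : (1:ℝ≥0∞) - ν E = 1 := le_antisymm (by simp) (h3 ▸ h2)
  have := ENNReal.sub_sub_cancel (by norm_num : (1:ℝ≥0∞) ≠ ⊤) h4
  rw [h5] at this
  simpa using this.symm

lemma thick_pi {ν : Measure ℝ} [IsProbabilityMeasure ν] {C : Set ℝ} (hC : ν C = 1) :
    ∀ (N : ℕ) (V : Set (Fin N → ℝ)), MeasurableSet V → (∀ c ∈ V, ∃ i, c i ∉ C) →
    Measure.pi (fun _ : Fin N => ν) V = 0 := by
  intro N
  induction N with
  | zero =>
    intro V hV hd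
    have : V = ∅ := by
      ext c; simp only [mem_empty_iff_false, iff_false]
      intro hc; obtain ⟨i, -⟩ := hd c hc; exact i.elim0
    simp [this]
  | succ n ih =>
    intro V hV hd
    have hpres := measurePreserving_piFinSuccAbove (fun _ : Fin (n+1) => ν) 0
    set e := MeasurableEquiv.piFinSuccAbove (fun _ : Fin (n+1) => ℝ) 0 with he
    set W : Set (ℝ × (Fin n → ℝ)) := e.symm ⁻¹' V with hW
    have hWm : MeasurableSet W := e.symm.measurable hV
    have hVW : V = e ⁻¹' W := by
      rw [hW, ← Set.preimage_comp]
      simp [Function.comp_def]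
    have hμ : Measure.pi (fun _ : Fin (n+1) => ν) V
        = (ν.prod (Measure.pi fun _ : Fin n => ν)) W := by
      rw [hVW]; exact hpres.measure_preimage hWm.nullMeasurableSet
    rw [hμ, Measure.prod_apply hWm]
    have hmf : Measurable fun x => (Measure.pi fun _ : Fin n => ν) (Prod.mk x ⁻¹' W) :=
      measurable_measure_prodMk_left hWm
    rw [lintegral_eq_zero_iff hmf]
    have hnull : ν {x | (Measure.pi fun _ : Fin n => ν) (Prod.mk x ⁻¹' W) ≠ 0} = 0 := by
      apply null_of_disjoint hC (hmf (measurableSet_singleton 0)).compl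
      intro x hx hxC
      apply hx
      apply ih _ (hWm.preimage measurable_prodMk_left)
      intro y hy
      have hmem : e.symm (x, y) ∈ V := hy
      obtain ⟨i, hi⟩ := hd _ hmem
      have hval : e.symm (x, y) = Fin.insertNth 0 x y := rfl
      rw [hval] at hi
      refine Fin.cases ?_ ?_ i hi
      · intro h0; rw [Fin.insertNth_apply_same] at h0; exact absurd hxC h0
      · intro j hj
        rw [Fin.insertNth_zero, Fin.cons_succ] at hj
        exact ⟨j, hj⟩
    filter_upwards [measure_eq_zero_iff_ae_notMem.mp hnull] with x hx
    simpa using hx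


/-- The set Ω of N-tuples (c₁,…,c_N) ∈ C^N with |S_{c₁} ∩ ⋯ ∩ S_{c_N}| ≥ θ^N|X|/2
has ν^N-measure at least θ^N/2. -/
theorem stmt12 {X : Type*} [Fintype X] [Nonempty X]
    (C : Set ℝ) (ν : Measure ℝ) (hprob : IsProbabilityMeasure ν) (hC : ν C = 1)
    (θ : ℝ) (hθ0 : 0 < θ) (hθ1 : θ ≤ 1)
    (S : ℝ → Finset X)
    (hcard : ∀ c ∈ C, θ * (Fintype.card X : ℝ) ≤ ((S c).card : ℝ))
    (hmeas : ∀ x : X, MeasurableSet {c : ℝ | x ∈ S c})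
    (N : ℕ) :
    ENNReal.ofReal (1/2 * θ ^ N) ≤
      (Measure.pi fun _ : Fin N => ν)
        {c : Fin N → ℝ | (∀ i, c i ∈ C) ∧
          1/2 * θ ^ N * (Fintype.card X : ℝ) ≤ ((⋂ i, ((S (c i) : Set X))).ncard : ℝ)} := by
  classical
  set μ := Measure.pi fun _ : Fin N => ν with hμdef
  haveI : IsProbabilityMeasure μ := by rw [hμdef]; infer_instance
  set κ : ℝ := (Fintype.card X : ℝ) with hκdef
  have hκpos : (0:ℝ) < κ := by rw [hκdef]; exact_mod_cast Fintype.card_pos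
  -- the modified family S' satisfying the cardinality bound everywhere
  set S' : ℝ → Finset X := fun c => if θ * κ ≤ ((S c).card : ℝ) then S c else Finset.univ
    with hS'def
  have hS'C : ∀ c ∈ C, S' c = S c := fun c hc => if_pos (hcard c hc)
  have hcard' : ∀ c, θ * κ ≤ ((S' c).card : ℝ) := by
    intro c
    by_cases h : θ * κ ≤ ((S c).card : ℝ)
    · rw [hS'def]; simpa [h] using h
    · rw [hS'def]; simp only [h, if_false]
      rw [Finset.card_univ, ← hκdef]
      nlinarith
  -- measurability of the sets A' x = {c | x ∈ S' c}
  have hcardfun : Measurable fun c => ((S c).card : ℝ) := by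
    have hrw : (fun c => ((S c).card : ℝ))
        = fun c => ∑ x : X, ({c' : ℝ | x ∈ S c'}).indicator (fun _ => (1:ℝ)) c := by
      funext c
      simp only [Set.indicator_apply, Set.mem_setOf_eq]
      rw [Finset.sum_boole]
      congr 1
      rw [Finset.filter_univ_mem]
    rw [hrw]
    exact Finset.measurable_sum _ fun x _ => (measurable_const.indicator (hmeas x))
  have hbig : MeasurableSet {c : ℝ | θ * κ ≤ ((S c).card : ℝ)} :=
    hcardfun measurableSet_Ici
  have hA' : ∀ x : X, MeasurableSet {c : ℝ | x ∈ S' c} := by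
    intro x
    have : {c : ℝ | x ∈ S' c}
        = ({c : ℝ | θ * κ ≤ ((S c).card : ℝ)} ∩ {c : ℝ | x ∈ S c})
          ∪ {c : ℝ | θ * κ ≤ ((S c).card : ℝ)}ᶜ := by
      ext c
      by_cases h : θ * κ ≤ ((S c).card : ℝ) <;>
        simp [hS'def, h]
    rw [this]
    exact (hbig.inter (hmeas x)).union hbig.compl
  set p : X → ℝ≥0∞ := fun x => ν {c : ℝ | x ∈ S' c} with hpdef
  have hptop : ∀ x, p x ≠ ⊤ := fun x => measure_ne_top ν _
  -- Step 1 : ofReal (θ κ) ≤ ∑ p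
  have step1 : ENNReal.ofReal (θ * κ) ≤ ∑ x : X, p x := by
    have hpt : ∀ c : ℝ, ENNReal.ofReal (θ * κ)
        ≤ ∑ x : X, ({c' : ℝ | x ∈ S' c'}).indicator (fun _ => (1:ℝ≥0∞)) c := by
      intro c
      have hsum : ∑ x : X, ({c' : ℝ | x ∈ S' c'}).indicator (fun _ => (1:ℝ≥0∞)) c
          = ((S' c).card : ℝ≥0∞) := by
        simp only [Set.indicator_apply, Set.mem_setOf_eq]
        rw [Finset.sum_boole]
        congr 1
        rw [Finset.filter_univ_mem]
      rw [hsum, ← ENNReal.ofReal_natCast]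
      exact ENNReal.ofReal_le_ofReal (hcard' c)
    calc ENNReal.ofReal (θ * κ) = ∫⁻ _, ENNReal.ofReal (θ * κ) ∂ν := by
          simp [lintegral_const]
      _ ≤ ∫⁻ c, ∑ x : X, ({c' : ℝ | x ∈ S' c'}).indicator (fun _ => (1:ℝ≥0∞)) c ∂ν :=
          lintegral_mono hpt
      _ = ∑ x : X, ∫⁻ c, ({c' : ℝ | x ∈ S' c'}).indicator (fun _ => (1:ℝ≥0∞)) c ∂ν :=
          lintegral_finset_sum _ fun x _ => measurable_const.indicator (hA' x)
      _ = ∑ x : X, p x := by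
          refine Finset.sum_congr rfl fun x _ => ?_
          rw [lintegral_indicator (hA' x)]
          simp [hpdef]
  -- Step 2 : Jensen
  set q : X → ℝ := fun x => (p x).toReal with hqdef
  have hq0 : ∀ x, 0 ≤ q x := fun x => ENNReal.toReal_nonneg
  have hsumq : θ * κ ≤ ∑ x : X, q x := by
    have hfin : (∑ x : X, p x) ≠ ⊤ := by
      exact (ENNReal.sum_lt_top.mpr fun x _ => (hptop x).lt_top).ne
    have := ENNReal.toReal_mono hfin step1
    rwa [ENNReal.toReal_ofReal (by positivity), ENNReal.toReal_sum (fun x _ => hptop x)] at this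
  have hJ : θ ^ N * κ ≤ ∑ x : X, (q x) ^ N := by
    cases N with
    | zero => simp [hκdef]
    | succ n =>
      have hjen := pow_sum_div_card_le_sum_pow (s := Finset.univ) (f := q)
        (fun i _ => hq0 i) n
      rw [Finset.card_univ, ← hκdef] at hjen
      have h1 : (θ*κ)^(n+1) ≤ (∑ x : X, q x)^(n+1) :=
        pow_le_pow_left₀ (by positivity) hsumq _
      calc θ^(n+1) * κ = (θ*κ)^(n+1) / κ^n := by
            field_simp
            ring
        _ ≤ (∑ x : X, q x)^(n+1) / κ^n := by gcongr
        _ ≤ ∑ x : X, (q x)^(n+1) := hjen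
  have step2 : ENNReal.ofReal (θ ^ N * κ) ≤ ∑ x : X, (p x) ^ N := by
    have : ∑ x : X, (p x) ^ N = ENNReal.ofReal (∑ x : X, (q x) ^ N) := by
      rw [ENNReal.ofReal_sum_of_nonneg (fun x _ => by positivity)]
      refine Finset.sum_congr rfl fun x _ => ?_
      rw [ENNReal.ofReal_pow (hq0 x), hqdef, ENNReal.ofReal_toReal (hptop x)]
    rw [this]
    exact ENNReal.ofReal_le_ofReal hJ
  -- Step 3 : product sets
  set B : X → Set (Fin N → ℝ) := fun x => Set.pi Set.univ (fun _ : Fin N => {c : ℝ | x ∈ S' c})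
    with hBdef
  have hBm : ∀ x, MeasurableSet (B x) := fun x => MeasurableSet.univ_pi fun _ => hA' x
  have hμB : ∀ x, μ (B x) = (p x) ^ N := by
    intro x
    rw [hBdef, hμdef]
    simp only
    rw [Measure.pi_pi]
    simp [hpdef]
  -- Step 4 : Markov
  set g : (Fin N → ℝ) → ℝ≥0∞ := fun c => ∑ x : X, (B x).indicator (fun _ => (1:ℝ≥0∞)) c
    with hgdef
  have hgm : Measurable g :=
    Finset.measurable_sum _ fun x _ => measurable_const.indicator (hBm x)
  set k : (Fin N → ℝ) → ℕ := fun c => (Finset.univ.filter fun x : X => ∀ i, x ∈ S' (c i)).card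
    with hkdef
  have hgk : ∀ c, g c = (k c : ℝ≥0∞) := by
    intro c
    rw [hgdef, hkdef]
    simp only [Set.indicator_apply, hBdef, Set.mem_pi, Set.mem_univ, forall_true_left,
      Set.mem_setOf_eq]
    rw [Finset.sum_boole]
  set t : ℝ≥0∞ := ENNReal.ofReal (1/2 * θ^N * κ) with htdef
  set Ω : Set (Fin N → ℝ) := g ⁻¹' (Set.Ici t) with hΩdef
  have hΩm : MeasurableSet Ω := hgm measurableSet_Ici
  have hmarkov : ∀ c, g c ≤ (Fintype.card X : ℝ≥0∞) * Ω.indicator (fun _ => (1:ℝ≥0∞)) c + t := by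
    intro c
    by_cases hc : c ∈ Ω
    · rw [Set.indicator_of_mem hc, mul_one, hgk]
      refine le_add_right ?_
      exact_mod_cast Nat.cast_le.mpr (Finset.card_filter_le _ _)
    · rw [Set.indicator_of_notMem hc, mul_zero, zero_add]
      have : ¬ t ≤ g c := hc
      exact le_of_not_ge this
  have step4 : ENNReal.ofReal (θ ^ N * κ) ≤ (Fintype.card X : ℝ≥0∞) * μ Ω + t := by
    calc ENNReal.ofReal (θ ^ N * κ) ≤ ∑ x : X, (p x) ^ N := step2
      _ = ∑ x : X, μ (B x) := by
          exact Finset.sum_congr rfl fun x _ => (hμB x).symm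
      _ = ∑ x : X, ∫⁻ c, (B x).indicator (fun _ => (1:ℝ≥0∞)) c ∂μ := by
          refine Finset.sum_congr rfl fun x _ => ?_
          rw [lintegral_indicator (hBm x)]
          simp
      _ = ∫⁻ c, g c ∂μ := (lintegral_finset_sum _ fun x _ =>
          measurable_const.indicator (hBm x)).symm
      _ ≤ ∫⁻ c, ((Fintype.card X : ℝ≥0∞) * Ω.indicator (fun _ => (1:ℝ≥0∞)) c + t) ∂μ :=
          lintegral_mono hmarkov
      _ = (Fintype.card X : ℝ≥0∞) * μ Ω + t := by
          rw [lintegral_add_right _ measurable_const, lintegral_const_mul _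
            (measurable_const.indicator hΩm), lintegral_indicator hΩm]
          simp
  have hμΩ : ENNReal.ofReal (1/2 * θ^N) ≤ μ Ω := by
    have hsplit : ENNReal.ofReal (θ ^ N * κ) = t + t := by
      rw [htdef, ← ENNReal.ofReal_add (by positivity) (by positivity)]
      congr 1
      ring
    rw [hsplit] at step4
    have hcancel : t ≤ (Fintype.card X : ℝ≥0∞) * μ Ω := by
      have := step4
      rwa [ENNReal.add_le_add_iff_right ENNReal.ofReal_ne_top] at this
    have ht2 : t = (Fintype.card X : ℝ≥0∞) * ENNReal.ofReal (1/2 * θ^N) := by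
      rw [htdef, hκdef, ENNReal.ofReal_mul (by positivity)]
      rw [ENNReal.ofReal_natCast, mul_comm]
    rw [ht2] at hcancel
    have hκ0 : (Fintype.card X : ℝ≥0∞) ≠ 0 := by
      exact_mod_cast Fintype.card_ne_zero
    have hκt : (Fintype.card X : ℝ≥0∞) ≠ ⊤ := ENNReal.natCast_ne_top _
    exact (ENNReal.mul_le_mul_iff_right hκ0 hκt).mp hcancel
  -- Step 5 : conclusion via thickness
  set T : Set (Fin N → ℝ) := {c : Fin N → ℝ | (∀ i, c i ∈ C) ∧
      1/2 * θ ^ N * κ ≤ ((⋂ i, ((S (c i) : Set X))).ncard : ℝ)} with hTdef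
  have hsub : ∀ c ∈ Ω, (∀ i, c i ∈ C) → c ∈ T := by
    intro c hcΩ hcC
    refine ⟨hcC, ?_⟩
    have hkc : ((⋂ i, ((S (c i) : Set X))).ncard : ℝ) = (k c : ℝ) := by
      have hset : (⋂ i, ((S (c i) : Set X)))
          = ((Finset.univ.filter fun x : X => ∀ i, x ∈ S' (c i)) : Finset X) := by
        ext x
        simp only [Set.mem_iInter, Finset.coe_filter, Set.mem_setOf_eq, Finset.mem_coe,
          Finset.mem_univ, true_and, Finset.mem_filter]
        constructor
        · intro h i; rw [hS'C _ (hcC i)]; exact h i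
        · intro h i; have := h i; rwa [hS'C _ (hcC i)] at this
      rw [hset, Set.ncard_coe_finset, hkdef]
    rw [hkc]
    have : t ≤ g c := hcΩ
    rw [hgk c, htdef] at this
    have h2 := ENNReal.toReal_mono (by simp) this
    rwa [ENNReal.toReal_ofReal (by positivity), ENNReal.toReal_natCast] at h2
  set W := toMeasurable μ T with hWdef
  have hTW : T ⊆ W := subset_toMeasurable μ T
  have hμTW : μ T = μ W := (measure_toMeasurable T).symm
  have hV : μ (Ω \ W) = 0 := by
    rw [hμdef]
    apply thick_pi hC
    · exact hΩm.diff (measurableSet_toMeasurable μ T)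
    · intro c hc
      by_contra hcon
      push_neg at hcon
      exact hc.2 (hTW (hsub c hc.1 hcon))
  calc ENNReal.ofReal (1/2 * θ ^ N) ≤ μ Ω := hμΩ
    _ ≤ μ (W ∪ (Ω \ W)) := measure_mono (fun c hc => by
        by_cases h : c ∈ W
        · exact Or.inl h
        · exact Or.inr ⟨hc, h⟩)
    _ ≤ μ W + μ (Ω \ W) := measure_union_le _ _
    _ = μ T := by rw [hV, add_zero, hμTW]
end

section
/- Let δ ∈ 2^{-ℕ}, let β > 0, C > 0, ρ > 0, and let μ be a finite Borel measure on ℝ satisfying μ(B(x,r)) ≤ C r^{β} for all x ∈ ℝ and r > 0. Let 𝓑 be the family of dyadic intervals I of length δ with μ(I) ≥ ρ, and let B_δ := (δ·ℤ) ∩ ⋃𝓑. Then for every x ∈ ℝ and every r ≥ δ, |B_δ ∩ B(x,r)| ≤ ρ^{-1} C (2r)^{β}. -/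
open MeasureTheory Metric Set Pointwise

/-- Frostman-type estimate for the discretised set B_δ = (δ·ℤ) ∩ ⋃𝓑 obtained from
the ρ-heavy dyadic intervals 𝓑 of a measure μ with μ(B(x,r)) ≤ C r^β. -/
theorem stmt15 (δ : ℝ) (hδ : isDyadic δ) (β C ρ : ℝ)
    (hβ : 0 < β) (hC : 0 < C) (hρ : 0 < ρ)
    (μ : Measure ℝ) (hfin : IsFiniteMeasure μ)
    (hfrost : ∀ x : ℝ, ∀ r : ℝ, 0 < r →
      μ (Metric.closedBall x r) ≤ ENNReal.ofReal (C * r ^ β)) :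
    ∀ x : ℝ, ∀ r : ℝ, δ ≤ r →
      ((((gridZ δ ∩
          ⋃ k ∈ {k : ℤ | ENNReal.ofReal ρ ≤ μ (Set.Ico ((k : ℝ) * δ) (((k : ℝ) + 1) * δ))},
            Set.Ico ((k : ℝ) * δ) (((k : ℝ) + 1) * δ))
        ∩ Metric.closedBall x r).ncard : ℝ)) ≤ ρ⁻¹ * C * (2 * r) ^ β := by
  obtain ⟨j, hj⟩ := hδ
  have hδ0 : 0 < δ := by rw [hj]; positivity
  intro x r hr
  have hr0 : 0 < r := lt_of_lt_of_le hδ0 hr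
  set H : Set ℤ := {k : ℤ | ENNReal.ofReal ρ ≤ μ (Set.Ico ((k : ℝ) * δ) (((k : ℝ) + 1) * δ))} with hH
  set K : Set ℤ := {k : ℤ | k ∈ H ∧ (k : ℝ) * δ ∈ Metric.closedBall x r} with hK
  have hSeq : (gridZ δ ∩ ⋃ k ∈ H, Set.Ico ((k:ℝ)*δ) (((k:ℝ)+1)*δ)) ∩ Metric.closedBall x r
      = (fun k : ℤ => (k:ℝ)*δ) '' K := by
    ext s
    constructor
    · rintro ⟨⟨⟨k', rfl⟩, hU⟩, hball⟩
      simp only [Set.mem_iUnion, exists_prop] at hU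
      obtain ⟨k, hk, h1, h2⟩ := hU
      have e1 : (k : ℝ) ≤ k' := le_of_mul_le_mul_right h1 hδ0
      have e2 : (k' : ℝ) < (k : ℝ) + 1 := lt_of_mul_lt_mul_right h2 hδ0.le
      have hkk : k' = k := by
        have f1 : k ≤ k' := by exact_mod_cast e1
        have f2 : k' < k + 1 := by exact_mod_cast (show (k' : ℝ) < ((k + 1 : ℤ) : ℝ) by push_cast; linarith)
        omega
      exact ⟨k, ⟨hk, hkk ▸ hball⟩, by rw [hkk]⟩
    · rintro ⟨k, ⟨hk, hb⟩, rfl⟩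
      refine ⟨⟨⟨k, rfl⟩, ?_⟩, hb⟩
      simp only [Set.mem_iUnion, exists_prop]
      exact ⟨k, hk, le_refl _, by nlinarith⟩
  have hKsub : K ⊆ Set.Icc ⌈(x - r)/δ⌉ ⌊(x + r)/δ⌋ := by
    rintro k ⟨_, hb⟩
    rw [Metric.mem_closedBall, Real.dist_eq, abs_le] at hb
    constructor
    · exact Int.ceil_le.mpr (by rw [div_le_iff₀ hδ0]; linarith)
    · exact Int.le_floor.mpr (by rw [le_div_iff₀ hδ0]; linarith)
  have hKfin : K.Finite := (Set.finite_Icc _ _).subset hKsub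
  have hinj : Function.Injective (fun k : ℤ => (k:ℝ)*δ) := by
    intro a b h
    simp only [mul_eq_mul_right_iff] at h
    rcases h with h | h
    · exact_mod_cast h
    · exact absurd h hδ0.ne'
  rw [hSeq, Set.ncard_image_of_injective _ hinj]
  -- measure bound
  set F : Finset ℤ := hKfin.toFinset with hF
  have hcard : K.ncard = F.card := by rw [hF, Set.ncard_eq_toFinset_card K hKfin]
  have hdisj : (↑F : Set ℤ).PairwiseDisjoint
      (fun k : ℤ => Set.Ico ((k:ℝ)*δ) (((k:ℝ)+1)*δ)) := by
    intro a _ b _ hab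
    rcases lt_or_gt_of_ne hab with h | h
    · apply Set.Ico_disjoint_Ico.mpr
      have h' : (a : ℝ) + 1 ≤ (b : ℝ) := by exact_mod_cast h
      exact min_le_iff.mpr (Or.inl (le_max_iff.mpr (Or.inr (by nlinarith))))
    · apply Set.Ico_disjoint_Ico.mpr
      have h' : (b : ℝ) + 1 ≤ (a : ℝ) := by exact_mod_cast h
      exact min_le_iff.mpr (Or.inr (le_max_iff.mpr (Or.inl (by nlinarith))))
  have hUsub : (⋃ k ∈ F, Set.Ico ((k:ℝ)*δ) (((k:ℝ)+1)*δ)) ⊆ Metric.closedBall x (2*r) := by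
    intro t ht
    simp only [Set.mem_iUnion, exists_prop] at ht
    obtain ⟨k, hkF, h1, h2⟩ := ht
    have hkK : k ∈ K := by rwa [hF, Set.Finite.mem_toFinset] at hkF
    have hb := hkK.2
    rw [Metric.mem_closedBall, Real.dist_eq, abs_le] at hb ⊢
    constructor <;> nlinarith [hb.1, hb.2]
  have hmeas : ENNReal.ofReal ρ * F.card ≤ ENNReal.ofReal (C * (2*r)^β) := by
    calc ENNReal.ofReal ρ * F.card = ∑ _k ∈ F, ENNReal.ofReal ρ := by
          rw [Finset.sum_const, nsmul_eq_mul, mul_comm]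
      _ ≤ ∑ k ∈ F, μ (Set.Ico ((k:ℝ)*δ) (((k:ℝ)+1)*δ)) := by
          apply Finset.sum_le_sum
          intro k hkF
          have hkK : k ∈ K := by rwa [hF, Set.Finite.mem_toFinset] at hkF
          exact hkK.1
      _ = μ (⋃ k ∈ F, Set.Ico ((k:ℝ)*δ) (((k:ℝ)+1)*δ)) :=
          (measure_biUnion_finset hdisj (fun k _ => measurableSet_Ico)).symm
      _ ≤ μ (Metric.closedBall x (2*r)) := measure_mono hUsub
      _ ≤ ENNReal.ofReal (C * (2*r)^β) := hfrost x (2*r) (by linarith)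
  have hreal : ρ * F.card ≤ C * (2*r)^β := by
    have h1 : ENNReal.ofReal (ρ * F.card) ≤ ENNReal.ofReal (C * (2*r)^β) := by
      rw [ENNReal.ofReal_mul hρ.le, ENNReal.ofReal_natCast]
      exact hmeas
    exact (ENNReal.ofReal_le_ofReal_iff (by positivity)).mp h1
  rw [hcard]
  rw [mul_assoc, le_inv_mul_iff₀ hρ]
  linarith
end
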